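/- If a word of length n contains c cubic runs, then it contains fewer than n - c runs in total. -/

import Mathlib

open List

universe u

/-- The factor `w[i..j]` of a word (inclusive positions). -/
def factor {α : Type u} (w : List α) (i j : ℕ) : List α := (w.drop i).take (j - i + 1)

/-- `p` is a period length of the word `u`. -/
def HasPeriodLen {α : Type u} (u : List α) (p : ℕ) : Prop :=
  1 ≤ p ∧ ∀ k, k + p < u.length → u[k]? = u[k + p]?

/-- The smallest period of a word. -/
noncomputable def minPeriod {α : Type u} (u : List α) : ℕ := sInf {p | HasPeriodLen u p}

/-- `[i..j]` is a run in `w`: the factor is periodic with smallest period at most half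
its length, and the periodicity extends neither to the left nor to the right. -/
def IsRun {α : Type u} (w : List α) (i j : ℕ) : Prop :=
  i < j ∧ j < w.length ∧
  2 * minPeriod (factor w i j) ≤ j - i + 1 ∧
  (0 < i → minPeriod (factor w i j) < minPeriod (factor w (i - 1) j)) ∧
  (j + 1 < w.length → minPeriod (factor w i j) < minPeriod (factor w i (j + 1)))

/-- A cubic run: a run whose length is at least three times its smallest period. -/
noncomputable def IsCubicRun {α : Type u} (w : List α) (i j : ℕ) : Prop :=
  IsRun w i j ∧ 3 * minPeriod (factor w i j) ≤ j - i + 1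

/-!
Fix a linear order on the alphabet. For a run of period `p`, use the order or its dual, whichever
makes the letter after the run smaller than the letter one period before it. Every factor of
length `p` inside the run is a rotation of a primitive word, and its least rotation is Lyndon, so
the run has a Lyndon root starting strictly after its first position; a cubic run has two, `p`
apart. A Lyndon root is the longest Lyndon word (for its order) starting at its position, and
Lyndon words of length at least two for opposite orders cannot start at the same position; hence
roots of distinct runs start at distinct positions of `(0, n)`, and `#runs + #cubic runs ≤ n - 1`.
-/

namespace List

variable {β : Type*}

theorem Lex.append_left_of_not_prefix {r : β → β → Prop} {y u : List β} (h : Lex r y u)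
    (hp : ¬ y <+: u) (x : List β) : Lex r (y ++ x) u := by
  induction h with
  | nil => exact absurd nil_prefix hp
  | cons _ ih => exact .cons (ih (mt (prefix_cons_inj _).2 hp))
  | rel h => exact .rel h

variable [LinearOrder β]

theorem lt_of_append_lt_append_left {x y z : List β} (h : x ++ y < x ++ z) : y < z := by
  induction x with
  | nil => exact h
  | cons b x ih => exact ih (cons_lt_cons_self.1 h)

def IsLyndon (u : List β) : Prop :=
  u ≠ [] ∧ ∀ d, 0 < d → d < u.length → u < u.drop d

theorem isLyndon_of_forall_lt_rotate {u : List β} (hu : u ≠ [])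
    (h : ∀ d, 0 < d → d < u.length → u < u.rotate d) : IsLyndon u := by
  refine ⟨hu, fun d hd hdu => ?_⟩
  have hrot : u.rotate d = u.drop d ++ u.take d := rotate_eq_drop_append_take hdu.le
  rcases lt_trichotomy u (u.drop d) with hlt | heq | hgt
  · exact hlt
  · exact absurd (congrArg length heq) (by rw [length_drop]; omega)
  by_cases hpre : u.drop d <+: u
  · -- `u.drop d` is a border, `u = u.drop d ++ z`: then `z < u.take d`, so the rotation
    -- `z ++ u.drop d` is smaller than `u`
    obtain ⟨z, hz⟩ := hpre
    have hzx : z < u.take d := by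
      refine lt_of_append_lt_append_left (x := u.drop d) ?_
      rw [hz, ← hrot]
      exact h d hd hdu
    have hlen : z.length = (u.take d).length := by
      have := congrArg length hz
      simp only [length_append, length_drop, length_take] at this ⊢
      omega
    have hzy : z ++ u.drop d < u := by
      have hnp : ¬ z <+: u.take d := fun hp => hzx.ne (hp.eq_of_length hlen)
      have := (Lex.append_left_of_not_prefix hzx hnp (u.drop d)).append_right _ (u.drop d)
      rwa [take_append_drop] at this
    have hrot' : u.rotate (u.drop d).length = z ++ u.drop d := by
      rw [← rotate_append_length_eq, hz]
    exact absurd (hrot' ▸ h _ (by rw [length_drop]; omega) (by rw [length_drop]; omega)) (not_lt_of_gt hzy)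
  · have := Lex.append_left_of_not_prefix hgt hpre (u.take d)
    exact absurd (hrot ▸ h d hd hdu) (not_lt_of_gt this)

theorem exists_isLyndon_rotate {u : List β} (hu : u ≠ [])
    (hprim : ∀ d, 0 < d → d < u.length → u.rotate d ≠ u) :
    ∃ k < u.length, IsLyndon (u.rotate k) := by
  have hpos : 0 < u.length := length_pos_iff.2 hu
  obtain ⟨k, hk, hmin⟩ := (Finset.range u.length).exists_min_image u.rotate ⟨0, by simpa⟩
  rw [Finset.mem_range] at hk
  refine ⟨k, hk, isLyndon_of_forall_lt_rotate (by simpa using hu) fun d hd hdu => ?_⟩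
  rw [length_rotate] at hdu
  rw [rotate_rotate, ← rotate_mod u (k + d)]
  refine lt_of_le_of_ne (hmin _ (Finset.mem_range.2 (Nat.mod_lt _ hpos))) fun heq => ?_
  rw [rotate_mod, ← add_comm, ← rotate_rotate] at heq
  exact hprim d hd hdu (rotate_eq_rotate.1 heq.symm)

theorem IsLyndon.head_le {u : List β} (hu : IsLyndon u) {k : ℕ} (hk : k < u.length) :
    u[0] ≤ u[k] := by
  rcases Nat.eq_zero_or_pos k with rfl | hk0
  · rfl
  obtain ⟨b, v, rfl⟩ := exists_cons_of_ne_nil hu.1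
  have h := hu.2 k hk0 hk
  rw [drop_eq_getElem_cons hk] at h
  exact head_le_of_lt h

theorem IsLyndon.head_lt_getElem_pred {u : List β} (hu : IsLyndon u) (h2 : 2 ≤ u.length) :
    u[0] < u[u.length - 1] := by
  obtain ⟨b, v, rfl⟩ := exists_cons_of_ne_nil hu.1
  have h := hu.2 (v.length) (by rw [length_cons] at h2; omega) (by simp)
  rw [drop_eq_getElem_cons (by simp), drop_eq_nil_of_le (by simp)] at h
  rcases cons_lt_cons_iff.1 h with h | ⟨-, h⟩
  · simpa using h
  · exact absurd h (not_lt_nil _)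

end List

section Periodicity

variable {β : Type*}

def seg (a : ℕ → β) (t m : ℕ) : List β := List.ofFn fun k : Fin m => a (t + k)

@[simp] theorem length_seg (a : ℕ → β) (t m : ℕ) : (seg a t m).length = m := by
  simp [seg]

@[simp] theorem getElem_seg (a : ℕ → β) (t m k : ℕ) (hk : k < (seg a t m).length) :
    (seg a t m)[k] = a (t + k) := by
  simp [seg]

theorem seg_eq_seg_iff {a : ℕ → β} {s t m : ℕ} :
    seg a s m = seg a t m ↔ ∀ l < m, a (s + l) = a (t + l) := by
  refine ⟨fun h l hl => ?_, fun h => ext_getElem (by simp) fun l hl _ => ?_⟩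
  · have := congrArg (·[l]?) h
    rwa [getElem?_eq_getElem (by simpa), getElem?_eq_getElem (by simpa), Option.some_inj,
      getElem_seg, getElem_seg] at this
  · simpa using h l (by simpa using hl)

theorem drop_seg (a : ℕ → β) (t m d : ℕ) : (seg a t m).drop d = seg a (t + d) (m - d) :=
  ext_getElem (by simp) fun l _ _ => by simp [Nat.add_assoc]

theorem seg_add (a : ℕ → β) (t m k : ℕ) : seg a t (m + k) = seg a t m ++ seg a (t + m) k := by
  refine ext_getElem (by simp) fun l _ _ => ?_
  rw [getElem_append]
  split_ifs with hl
  · simp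
  · simp only [getElem_seg, length_seg]
    congr 1
    rw [length_seg] at hl
    omega

theorem seg_succ (a : ℕ → β) (t m : ℕ) : seg a t (m + 1) = a t :: seg a (t + 1) m := by
  refine ext_getElem (by simp) fun l _ _ => ?_
  cases l <;> simp [Nat.add_assoc, Nat.add_comm 1]

theorem seg_eq_append_cons (a : ℕ → β) {t m k : ℕ} (hk : k < m) :
    seg a t m = seg a t k ++ a (t + k) :: seg a (t + k + 1) (m - k - 1) := by
  rw [← seg_succ, ← seg_add]
  congr 1
  omega

def IsPeriodOn (a : ℕ → β) (i j p : ℕ) : Prop :=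
  ∀ x, i ≤ x → x + p ≤ j → a x = a (x + p)

namespace IsPeriodOn

variable {a : ℕ → β} {i j p : ℕ} (hper : IsPeriodOn a i j p)
include hper

theorem apply_add_mul {x : ℕ} (hx : i ≤ x) (c : ℕ) (hc : x + p * c ≤ j) :
    a (x + p * c) = a x := by
  induction c with
  | zero => rfl
  | succ c ih =>
    rw [Nat.mul_succ] at hc ⊢
    rw [← Nat.add_assoc, ← hper _ (by omega) (by omega), ih (by omega)]

theorem apply_eq_of_modEq {x y : ℕ} (hx : i ≤ x) (hxj : x ≤ j) (hy : i ≤ y) (hyj : y ≤ j)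
    (hxy : x ≡ y [MOD p]) : a x = a y := by
  wlog hle : x ≤ y generalizing x y
  · exact (this hy hyj hx hxj hxy.symm (by omega)).symm
  obtain ⟨c, hc⟩ := (Nat.modEq_iff_dvd' hle).1 hxy
  rw [show y = x + p * c by omega]
  exact (hper.apply_add_mul hx c (by omega)).symm

theorem seg_rotate {s k : ℕ} (hs : i ≤ s) (hk : s + k + p ≤ j + 1) :
    (seg a s p).rotate k = seg a (s + k) p := by
  refine ext_getElem (by simp) fun l hl _ => ?_
  simp only [length_rotate, length_seg] at hl
  rw [getElem_rotate, getElem_seg, getElem_seg]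
  have hmod := Nat.mod_lt (l + k) (show 0 < p by omega)
  refine hper.apply_eq_of_modEq (by omega) (by rw [length_seg]; omega) (by omega) (by omega) ?_
  simp only [length_seg]
  rw [Nat.add_assoc s k l, Nat.add_comm k l]
  exact Nat.ModEq.add_left s (Nat.mod_modEq _ _)

theorem seg_add_self {s m : ℕ} (hs : i ≤ s) (hm : s + p + m ≤ j + 1) :
    seg a (s + p) m = seg a s m :=
  seg_eq_seg_iff.2 fun l hl => by rw [Nat.add_right_comm]; exact (hper _ (by omega) (by omega)).symm

theorem apply_ne_of_not_succ (hp : p ≤ j + 1) (h : ¬ IsPeriodOn a i (j + 1) p) :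
    a (j + 1 - p) ≠ a (j + 1) := by
  refine fun heq => h fun x hx hxj => ?_
  rcases hxj.lt_or_eq with hlt | hend
  · exact hper x hx (by omega)
  · rwa [hend, show x = j + 1 - p by omega]

theorem apply_ne_of_not_pred (h : ¬ IsPeriodOn a (i - 1) j p) : a (i - 1) ≠ a (i - 1 + p) := by
  refine fun heq => h fun x hx hxj => ?_
  rcases hx.lt_or_eq with hlt | rfl
  · exact hper x (by omega) hxj
  · exact heq

end IsPeriodOn

end Periodicity

section Runs

open OrderDual

variable {β : Type*} {a : ℕ → β} {n i j p t : ℕ}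

structure IsRunWithPeriod (a : ℕ → β) (n i j p : ℕ) : Prop where
  lt_length : j < n
  pos : 0 < p
  two_mul_le : i + 2 * p ≤ j + 1
  periodic : IsPeriodOn a i j p
  minimal : ∀ q, 0 < q → q < p → ¬ IsPeriodOn a i j q
  left_ne : 0 < i → a (i - 1) ≠ a (i - 1 + p)
  right_ne : j + 1 < n → a (j + 1 - p) ≠ a (j + 1)

theorem IsPeriodOn.not_isLyndon_seg [LinearOrder β] (hper : IsPeriodOn a i j p) (hp : 0 < p)
    (hdrop : j + 1 < n → a (j + 1) < a (j + 1 - p)) (hit : i ≤ t) (htp : t + p ≤ j + 1)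
    {q : ℕ} (hpq : p < q) (hq : t + q ≤ n) : ¬ IsLyndon (seg a t q) := by
  intro hlyn
  have hlt := hlyn.2 p hp (by simpa using hpq)
  rw [drop_seg] at hlt
  refine not_lt_of_gt ?_ hlt
  by_cases hqj : t + q ≤ j + 1
  · -- the suffix is a proper prefix
    rw [hper.seg_add_self hit (by omega), seg_eq_append_cons a (show q - p < q by omega)]
    simpa using append_left_lt (l₁ := seg a t (q - p)) (nil_lt_cons _ _)
  · -- the suffix and the word first differ at position `j + 1`
    set m := j + 1 - p - t
    rw [seg_eq_append_cons a (show m < q - p by omega), hper.seg_add_self hit (by omega),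
      seg_eq_append_cons a (show m < q by omega)]
    refine append_left_lt (cons_lt_cons_iff.2 (Or.inl ?_))
    rw [show t + p + m = j + 1 by omega, show t + m = j + 1 - p by omega]
    exact hdrop (by omega)

namespace IsRunWithPeriod

variable (h : IsRunWithPeriod a n i j p)
include h

theorem dual : IsRunWithPeriod (toDual ∘ a) n i j p := h

theorem seg_rotate_ne {d : ℕ} (hd : 0 < d) (hdp : d < p) :
    (seg a (i + 1) p).rotate d ≠ seg a (i + 1) p := by
  have := h.two_mul_le
  intro heq
  rw [h.periodic.seg_rotate (by omega) (by omega), seg_eq_seg_iff] at heq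
  refine h.minimal d hd hdp fun x hx hxd => ?_
  -- reduce `x` modulo `p` into the window `[i + 1, i + p]`, where `heq` applies
  set l := (x + p - (i + 1)) % p
  have hl : l < p := Nat.mod_lt _ h.pos
  have hx' : i + 1 + l ≡ x [MOD p] :=
    calc i + 1 + l ≡ i + 1 + (x + p - (i + 1)) [MOD p] := Nat.ModEq.add_left _ (Nat.mod_modEq _ _)
      _ = x + p := by omega
      _ ≡ x [MOD p] := Nat.add_modEq_right
  calc a x = a (i + 1 + l) :=
        h.periodic.apply_eq_of_modEq (by omega) (by omega) (by omega) (by omega) hx'.symm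
    _ = a (i + 1 + d + l) := (heq l hl).symm
    _ = a (x + d) := h.periodic.apply_eq_of_modEq (by omega) (by omega) (by omega) (by omega)
        (by rw [Nat.add_right_comm]; exact Nat.ModEq.add_right d hx')

theorem exists_isLyndon_seg [LinearOrder β] : ∃ t, i < t ∧ t ≤ i + p ∧ IsLyndon (seg a t p) := by
  have := h.two_mul_le
  obtain ⟨k, hk, hlyn⟩ := exists_isLyndon_rotate (u := seg a (i + 1) p)
    (by simp [← length_pos_iff, h.pos]) fun d hd hdp => h.seg_rotate_ne hd (by simpa using hdp)
  rw [length_seg] at hk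
  rw [h.periodic.seg_rotate (by omega) (by omega)] at hlyn
  exact ⟨i + 1 + k, by omega, by omega, hlyn⟩

theorem left_le {i' j' : ℕ} (h' : IsRunWithPeriod a n i' j' p) (hi : i + p ≤ j' + 1) : i ≤ i' := by
  by_contra! hlt
  exact h.left_ne (by omega) (h'.periodic _ (by omega) (by omega))

theorem right_le {i' j' : ℕ} (h' : IsRunWithPeriod a n i' j' p) (hi' : i' + p ≤ j + 1) :
    j' ≤ j := by
  by_contra! hlt
  have := h'.lt_length
  exact h.right_ne (by omega) ((h'.periodic _ (by omega) (by omega)).trans (by congr 1; omega))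

theorem eq_of_overlap {i' j' : ℕ} (h' : IsRunWithPeriod a n i' j' p) (hit : i < t)
    (htj : t + p ≤ j + 1) (hit' : i' < t) (htj' : t + p ≤ j' + 1) : i = i' ∧ j = j' :=
  ⟨le_antisymm (h.left_le h' (by omega)) (h'.left_le h (by omega)),
    le_antisymm (h'.right_le h (by omega)) (h.right_le h' (by omega))⟩

end IsRunWithPeriod

end Runs

section LyndonRoots

open OrderDual

variable {β : Type*} [LinearOrder β] {a : ℕ → β} {n i j p t : ℕ}

theorem apply_ne_of_isLyndon_seg {q : ℕ} (hl : IsLyndon (seg a t q)) (hq : 2 ≤ q) :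
    a t ≠ a (t + (q - 1)) :=
  (by simpa using hl.head_lt_getElem_pred (by simpa using hq) : a t < a (t + (q - 1))).ne

theorem not_isLyndon_seg_toDual_of_isLyndon_seg {q : ℕ} (hl : IsLyndon (seg a t p)) (hp : 2 ≤ p)
    (hq : 2 ≤ q) : ¬ IsLyndon (seg (toDual ∘ a) t q) := by
  intro hl'
  have hlt := hl.head_lt_getElem_pred (by simpa using hp)
  have hlt' := hl'.head_lt_getElem_pred (by simpa using hq)
  simp only [getElem_seg, length_seg, Nat.add_zero, Function.comp_apply, toDual_lt_toDual]
    at hlt hlt'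
  rcases le_total p q with hpq | hqp
  · have hle := hl'.head_le (k := p - 1) (by rw [length_seg]; omega)
    simp only [getElem_seg, Nat.add_zero, Function.comp_apply, toDual_le_toDual] at hle
    exact not_lt_of_ge hle hlt
  · have hle := hl.head_le (k := q - 1) (by rw [length_seg]; omega)
    simp only [getElem_seg, Nat.add_zero] at hle
    exact not_lt_of_ge hle hlt'

def IsLyndonRootStart (a : ℕ → β) (n i j p t : ℕ) : Prop :=
  i < t ∧ t + p ≤ j + 1 ∧
    ((j + 1 < n → a (j + 1) < a (j + 1 - p)) ∧ IsLyndon (seg a t p) ∨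
      (j + 1 < n → a (j + 1 - p) < a (j + 1)) ∧ IsLyndon (seg (toDual ∘ a) t p))

namespace IsRunWithPeriod

variable (h : IsRunWithPeriod a n i j p)
include h

theorem exists_isLyndonRootStart : ∃ t ≤ i + p, IsLyndonRootStart a n i j p t := by
  have := h.two_mul_le
  by_cases hdrop : j + 1 < n → a (j + 1) < a (j + 1 - p)
  · obtain ⟨t, hit, htp, hl⟩ := h.exists_isLyndon_seg
    exact ⟨t, htp, hit, by omega, .inl ⟨hdrop, hl⟩⟩
  · obtain ⟨hj, hge⟩ := Classical.not_imp.1 hdrop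
    obtain ⟨t, hit, htp, hl⟩ := h.dual.exists_isLyndon_seg
    exact ⟨t, htp, hit, by omega, .inr ⟨fun _ => (not_lt.1 hge).lt_of_ne (h.right_ne hj), hl⟩⟩

theorem mem_Ioo_of_isLyndonRootStart (ht : IsLyndonRootStart a n i j p t) :
    t ∈ Finset.Ioo 0 n := by
  have := h.pos
  have := h.lt_length
  exact Finset.mem_Ioo.2 ⟨by have := ht.1; omega, by have := ht.2.1; omega⟩

theorem isLyndonRootStart_add (ht : IsLyndonRootStart a n i j p t) (h3 : t + 2 * p ≤ j + 1) :
    IsLyndonRootStart a n i j p (t + p) := by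
  obtain ⟨hit, -, hroot⟩ := ht
  refine ⟨by omega, by omega, ?_⟩
  rwa [h.periodic.seg_add_self hit.le (by omega), h.dual.periodic.seg_add_self hit.le (by omega)]

theorem period_le {i' j' p' : ℕ} (h' : IsRunWithPeriod a n i' j' p')
    (ht : IsLyndonRootStart a n i j p t) (ht' : IsLyndonRootStart a n i' j' p' t) : p' ≤ p := by
  by_contra! hlt
  have := h.pos
  obtain ⟨hit, htj, hroot⟩ := ht
  obtain ⟨hit', htj', hroot'⟩ := ht'
  have hq : t + p' ≤ n := by have := h'.lt_length; omega
  rcases Nat.lt_or_ge p 2 with hp1 | hp2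
  · -- period one: the root of length `p'` would begin and end with the letter `a (t - 1)`
    have hends : a t = a (t + (p' - 1)) := by
      have e := h.periodic (t - 1) (by omega) (by omega)
      have e' := h'.periodic (t - 1) (by omega) (by omega)
      rw [show t - 1 + p = t by omega] at e
      rw [show t - 1 + p' = t + (p' - 1) by omega] at e'
      exact e.symm.trans e'
    rcases hroot' with ⟨-, hl⟩ | ⟨-, hl⟩ <;> exact apply_ne_of_isLyndon_seg hl (by omega) hends
  · rcases hroot with ⟨hd, hl⟩ | ⟨hd, hl⟩ <;> rcases hroot' with ⟨-, hl'⟩ | ⟨-, hl'⟩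
    · exact h.periodic.not_isLyndon_seg h.pos hd hit.le htj hlt hq hl'
    · exact not_isLyndon_seg_toDual_of_isLyndon_seg hl hp2 (by omega) hl'
    · exact not_isLyndon_seg_toDual_of_isLyndon_seg hl' (by omega) hp2 hl
    · exact h.dual.periodic.not_isLyndon_seg h.pos hd hit.le htj hlt hq hl'

theorem eq_of_isLyndonRootStart {i' j' p' : ℕ} (h' : IsRunWithPeriod a n i' j' p')
    (ht : IsLyndonRootStart a n i j p t) (ht' : IsLyndonRootStart a n i' j' p' t) :
    i = i' ∧ j = j' := by
  obtain rfl : p = p' := le_antisymm (h'.period_le h ht' ht) (h.period_le h' ht ht')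
  exact h.eq_of_overlap h' ht.1 ht.2.1 ht'.1 ht'.2.1

end IsRunWithPeriod

end LyndonRoots

open Finset in
theorem card_add_card_le_card_biUnion {ι κ : Type*} [DecidableEq κ] {R C : Finset ι}
    (hCR : C ⊆ R) {B : ι → Finset κ} (hB : (R : Set ι).PairwiseDisjoint B)
    (h1 : ∀ ρ ∈ R, (B ρ).Nonempty) (h2 : ∀ ρ ∈ C, 1 < #(B ρ)) : #R + #C ≤ #(R.biUnion B) := by
  classical
  rw [card_biUnion hB, card_eq_sum_ones, ← inter_eq_right.2 hCR, ← filter_mem_eq_inter,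
    card_filter, ← sum_add_distrib]
  refine sum_le_sum fun ρ hρ => ?_
  split_ifs with hC
  exacts [h2 ρ hC, (h1 ρ hρ).card_pos]

open Finset in
theorem card_add_card_cubic_le {β : Type*} {a : ℕ → β} {n : ℕ} {R C : Finset (ℕ × ℕ)}
    {per : ℕ × ℕ → ℕ} (hR : ∀ ρ ∈ R, IsRunWithPeriod a n ρ.1 ρ.2 (per ρ)) (hCR : C ⊆ R)
    (hC : ∀ ρ ∈ C, ρ.1 + 3 * per ρ ≤ ρ.2 + 1) : #R + #C ≤ n - 1 := by
  classical
  let _ : LinearOrder β := IsWellOrder.linearOrder WellOrderingRel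
  let B (ρ : ℕ × ℕ) := (Finset.Ioo 0 n).filter (IsLyndonRootStart a n ρ.1 ρ.2 (per ρ))
  have hB {ρ t} (hρ : ρ ∈ R) (ht : IsLyndonRootStart a n ρ.1 ρ.2 (per ρ) t) : t ∈ B ρ :=
    Finset.mem_filter.2 ⟨(hR ρ hρ).mem_Ioo_of_isLyndonRootStart ht, ht⟩
  have hdisj : (R : Set (ℕ × ℕ)).PairwiseDisjoint B := fun ρ hρ ρ' hρ' hne =>
    disjoint_left.2 fun t ht ht' => hne <| Prod.ext_iff.2 <|
      (hR ρ hρ).eq_of_isLyndonRootStart (hR ρ' hρ') (Finset.mem_filter.1 ht).2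
        (Finset.mem_filter.1 ht').2
  have hone (ρ) (hρ : ρ ∈ R) : (B ρ).Nonempty :=
    let ⟨t, _, ht⟩ := (hR ρ hρ).exists_isLyndonRootStart
    ⟨t, hB hρ ht⟩
  have htwo (ρ) (hρ : ρ ∈ C) : 1 < #(B ρ) := by
    have hρR := hCR hρ
    have := hC ρ hρ
    have := (hR ρ hρR).pos
    obtain ⟨t, htp, ht⟩ := (hR ρ hρR).exists_isLyndonRootStart
    exact one_lt_card.2 ⟨t, hB hρR ht, t + per ρ,
      hB hρR ((hR ρ hρR).isLyndonRootStart_add ht (by omega)), by omega⟩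
  calc #R + #C ≤ #(R.biUnion B) := card_add_card_le_card_biUnion hCR hdisj hone htwo
    _ ≤ #(Finset.Ioo 0 n) := card_le_card (biUnion_subset.2 fun ρ _ => filter_subset _ _)
    _ = n - 1 := Nat.card_Ioo 0 n

section Words

variable {α : Type u} {w : List α} {i j q : ℕ}

theorem getElem?_factor {k : ℕ} (hk : k < j - i + 1) : (factor w i j)[k]? = w[i + k]? := by
  rw [factor, getElem?_take, if_pos hk, getElem?_drop]

theorem length_factor (hij : i ≤ j) (hj : j < w.length) : (factor w i j).length = j - i + 1 := by
  rw [factor, length_take, length_drop]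
  omega

theorem hasPeriodLen_factor_iff (hij : i ≤ j) (hj : j < w.length) :
    HasPeriodLen (factor w i j) q ↔ 0 < q ∧ IsPeriodOn (w[·]?) i j q := by
  rw [HasPeriodLen, length_factor hij hj]
  refine and_congr Iff.rfl ⟨fun h x hix hxj => ?_, fun h k hk => ?_⟩
  · have := h (x - i) (by omega)
    rwa [getElem?_factor (by omega), getElem?_factor (by omega), Nat.add_sub_cancel' hix,
      ← Nat.add_assoc, Nat.add_sub_cancel' hix] at this
  · rw [getElem?_factor (by omega), getElem?_factor (by omega), ← Nat.add_assoc]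
    exact h _ (by omega) (by omega)

theorem hasPeriodLen_minPeriod {u : List α} (hu : u ≠ []) : HasPeriodLen u (minPeriod u) :=
  Nat.sInf_mem (s := {p | HasPeriodLen u p}) ⟨u.length, length_pos_iff.2 hu, fun k hk => by omega⟩

theorem minPeriod_le {u : List α} (h : HasPeriodLen u q) : minPeriod u ≤ q :=
  Nat.sInf_le h

theorem IsRun.isRunWithPeriod (h : IsRun w i j) :
    IsRunWithPeriod (w[·]?) w.length i j (minPeriod (factor w i j)) := by
  obtain ⟨hij, hj, h2, hl, hr⟩ := h
  have hne : factor w i j ≠ [] := by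
    rw [← length_pos_iff, length_factor hij.le hj]
    omega
  obtain ⟨hpos, hper⟩ := (hasPeriodLen_factor_iff hij.le hj).1 (hasPeriodLen_minPeriod hne)
  refine ⟨hj, hpos, by omega, hper, fun q hq hqp hq' => ?_, fun hi => hper.apply_ne_of_not_pred
    fun hper' => ?_, fun hj' => hper.apply_ne_of_not_succ (by omega) fun hper' => ?_⟩
  · exact absurd (minPeriod_le ((hasPeriodLen_factor_iff hij.le hj).2 ⟨hq, hq'⟩)) (by omega)
  · exact absurd (minPeriod_le ((hasPeriodLen_factor_iff (by omega) hj).2 ⟨hpos, hper'⟩))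
      (not_le.2 (hl hi))
  · exact absurd (minPeriod_le ((hasPeriodLen_factor_iff (by omega) hj').2 ⟨hpos, hper'⟩))
      (not_le.2 (hr hj'))

end Words

/-- If a word of length `n` contains `c` cubic runs, it contains fewer than `n - c` runs. -/
theorem runs_lt_length_sub_cubic {α : Type u} (w : List α) (hw : w ≠ []) (c : ℕ)
    (hc : c = {ij : ℕ × ℕ | IsCubicRun w ij.1 ij.2}.ncard) :
    {ij : ℕ × ℕ | IsRun w ij.1 ij.2}.ncard < w.length - c := by
  have hfin : {ij : ℕ × ℕ | IsRun w ij.1 ij.2}.Finite :=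
    ((Set.finite_Iio w.length).prod (Set.finite_Iio w.length)).subset
      fun ρ (h : IsRun w ρ.1 ρ.2) => show ρ.1 < _ ∧ ρ.2 < _ from ⟨h.1.trans h.2.1, h.2.1⟩
  have hfinC : {ij : ℕ × ℕ | IsCubicRun w ij.1 ij.2}.Finite := hfin.subset fun ρ h => h.1
  have key := card_add_card_cubic_le (R := hfin.toFinset) (C := hfinC.toFinset)
    (per := fun ρ => minPeriod (factor w ρ.1 ρ.2))
    (fun ρ hρ => (hfin.mem_toFinset.1 hρ).isRunWithPeriod)
    (Set.Finite.toFinset_subset_toFinset.2 fun ρ h => h.1)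
    (fun ρ hρ => by obtain ⟨⟨hij, -⟩, h3⟩ := hfinC.mem_toFinset.1 hρ; omega)
  rw [Set.ncard_eq_toFinset_card _ hfin, hc, Set.ncard_eq_toFinset_card _ hfinC]
  have := length_pos_iff.2 hw
  omega
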